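/- arXiv:1908.10421 — 3 statements merged into one kernel-verified Lean document; each statement's English description precedes it below -/
import Mathlib

section
/- For every nonnegative integer k, the convergence exponent of P_k equals 1; equivalently, limsup_{n→∞} (log n)/(log p^(k)_n) = 1, so that ∑_{p ∈ P_k} p^{-α} converges for α > 1 and diverges for α < 1. -/
open Filter Topology

/-- `pseq n` is the `n`-th prime number, with `pseq 1 = 2`. -/
noncomputable def pseq (n : ℕ) : ℕ := Nat.nth Nat.Prime (n - 1)

/-- `pk k n = p^(k)_n`: the `k`-fold iterate of `n ↦ p_n` applied to `n`. -/
noncomputable def pk (k n : ℕ) : ℕ := pseq^[k] n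

lemma centralBinom_le (n : ℕ) (hn : 1 ≤ n) :
    Nat.centralBinom n ≤ (2 * n) ^ (Nat.count Nat.Prime (2 * n + 1)) := by
  have h0 : Nat.centralBinom n ≠ 0 := (Nat.centralBinom_pos n).ne'
  have hsub : (Nat.centralBinom n).factorization.support ⊆
      (Finset.range (2 * n + 1)).filter Nat.Prime := by
    intro p hp
    have hprime : p.Prime := Nat.prime_of_mem_primeFactors (by
      rwa [Nat.support_factorization] at hp)
    have hpos : 0 < (Nat.centralBinom n).factorization p := by
      have := Finsupp.mem_support_iff.1 hp
      omega
    have hle : p ≤ 2 * n := by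
      have h1 : p ^ 1 ≤ p ^ (Nat.centralBinom n).factorization p :=
        Nat.pow_le_pow_right hprime.pos hpos
      have h2 : p ^ (Nat.centralBinom n).factorization p ≤ 2 * n := by
        rw [Nat.centralBinom]
        exact Nat.pow_factorization_choose_le (by omega)
      calc p = p ^ 1 := (pow_one p).symm
        _ ≤ _ := h1
        _ ≤ 2 * n := h2
    simp only [Finset.mem_filter, Finset.mem_range]
    exact ⟨by omega, hprime⟩
  calc Nat.centralBinom n = (Nat.centralBinom n).factorization.prod (· ^ ·) :=
        (Nat.factorization_prod_pow_eq_self h0).symm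
    _ ≤ (2 * n) ^ (Nat.centralBinom n).factorization.support.card := by
        apply Finset.prod_le_pow_card
        intro p hp
        rw [Nat.centralBinom]
        exact Nat.pow_factorization_choose_le (by omega)
    _ ≤ (2 * n) ^ (Nat.count Nat.Prime (2 * n + 1)) := by
        apply Nat.pow_le_pow_right (by omega)
        rw [Nat.count_eq_card_filter_range]
        exact Finset.card_le_card hsub

lemma chebyshev' (n : ℕ) (hn : 4 ≤ n) :
    (n : ℝ) * Real.log 4 ≤ (Nat.count Nat.Prime (2 * n + 1) + 1) * Real.log (2 * n) := by
  have h1 : (4 : ℕ) ^ n ≤ (2 * n) ^ (Nat.count Nat.Prime (2 * n + 1) + 1) := by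
    calc (4 : ℕ) ^ n ≤ n * Nat.centralBinom n := (Nat.four_pow_lt_mul_centralBinom n hn).le
      _ ≤ (2 * n) * (2 * n) ^ (Nat.count Nat.Prime (2 * n + 1)) := by
          exact Nat.mul_le_mul (by omega) (centralBinom_le n (by omega))
      _ = (2 * n) ^ (Nat.count Nat.Prime (2 * n + 1) + 1) := by ring
  have h2 : ((4 : ℕ) ^ n : ℝ) ≤ ((2 * n) ^ (Nat.count Nat.Prime (2 * n + 1) + 1) : ℕ) := by
    exact_mod_cast h1
  have h3 := Real.log_le_log (by positivity) h2
  push_cast at h3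
  rw [Real.log_pow, Real.log_pow] at h3
  push_cast at h3 ⊢
  convert h3 using 2

lemma one_le_log_four : (1 : ℝ) ≤ Real.log 4 := by
  rw [← Real.log_exp 1]
  exact Real.log_le_log (Real.exp_pos 1) (le_of_lt (lt_trans Real.exp_one_lt_d9 (by norm_num)))

lemma count_lower (N : ℕ) (h : 8 ≤ N) :
    ((N : ℝ) - 1) / 2 ≤ (Nat.count Nat.Prime N + 2) * Real.log N := by
  set n := N / 2 with hn
  have hn4 : 4 ≤ n := by omega
  have hc := chebyshev' n hn4
  have hcount : Nat.count Nat.Prime (2 * n + 1) ≤ Nat.count Nat.Prime N + 1 := by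
    have h1 : 2 * n + 1 ≤ N + 1 := by omega
    calc Nat.count Nat.Prime (2 * n + 1) ≤ Nat.count Nat.Prime (N + 1) :=
          Nat.count_monotone _ h1
      _ ≤ Nat.count Nat.Prime N + 1 := by
          rw [Nat.count_succ]; split <;> omega
  have hlogle : Real.log (2 * n) ≤ Real.log N := by
    apply Real.log_le_log (by positivity)
    have : 2 * n ≤ N := by omega
    exact_mod_cast this
  have hlognn : 0 ≤ Real.log (2 * (n : ℝ)) := by
    apply Real.log_nonneg
    have : (1 : ℝ) ≤ ((2 * n : ℕ) : ℝ) := by exact_mod_cast (by omega : 1 ≤ 2 * n)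
    push_cast at this; linarith
  have hNhalf : ((N : ℝ) - 1) / 2 ≤ (n : ℝ) := by
    have h2 : (N : ℝ) ≤ ((2 * n + 1 : ℕ) : ℝ) := by exact_mod_cast (by omega : N ≤ 2 * n + 1)
    push_cast at h2; linarith
  calc ((N : ℝ) - 1) / 2 ≤ (n : ℝ) := hNhalf
    _ ≤ (n : ℝ) * Real.log 4 := le_mul_of_one_le_right (by positivity) one_le_log_four
    _ ≤ (Nat.count Nat.Prime (2 * n + 1) + 1) * Real.log (2 * n) := by
        exact_mod_cast hc
    _ ≤ (Nat.count Nat.Prime N + 2) * Real.log N := by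
        apply mul_le_mul _ hlogle hlognn (by positivity)
        have : (Nat.count Nat.Prime (2 * n + 1) : ℝ) ≤ Nat.count Nat.Prime N + 1 := by
          exact_mod_cast hcount
        linarith

lemma pseq_le (ε : ℝ) (hε : 0 < ε) : ∀ᶠ m : ℕ in atTop, (pseq m : ℝ) ≤ (m : ℝ) ^ (1 + ε) := by
  have hc : (0 : ℝ) < 1 / (16 * (1 + ε)) := by positivity
  have hlog : ∀ᶠ x : ℝ in atTop, ‖Real.log x‖ ≤ (1 / (16 * (1 + ε))) * ‖x ^ ε‖ :=
    (isLittleO_log_rpow_atTop hε).bound hc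
  have hlogN : ∀ᶠ m : ℕ in atTop, ‖Real.log (m : ℝ)‖ ≤ (1 / (16 * (1 + ε))) * ‖(m : ℝ) ^ ε‖ :=
    tendsto_natCast_atTop_atTop.eventually hlog
  filter_upwards [hlogN, eventually_ge_atTop 16] with m hlogm hm16
  have hm0 : (0 : ℝ) < m := by positivity
  have hm1 : (1 : ℝ) ≤ m := by exact_mod_cast (by omega : 1 ≤ m)
  have hrpow16 : (16 : ℝ) ≤ (m : ℝ) ^ (1 + ε) := by
    calc (16 : ℝ) ≤ (m : ℝ) := by exact_mod_cast hm16
      _ = (m : ℝ) ^ (1 : ℝ) := (Real.rpow_one _).symm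
      _ ≤ (m : ℝ) ^ (1 + ε) := Real.rpow_le_rpow_of_exponent_le hm1 (by linarith)
  set N := Nat.floor ((m : ℝ) ^ (1 + ε)) with hN
  have hN16 : 16 ≤ N := Nat.le_floor (by exact_mod_cast hrpow16)
  have hNle : (N : ℝ) ≤ (m : ℝ) ^ (1 + ε) := Nat.floor_le (by positivity)
  have hNge : (m : ℝ) ^ (1 + ε) - 1 ≤ N := by
    have := Nat.lt_floor_add_one ((m : ℝ) ^ (1 + ε)); linarith
  -- key claim
  have hkey : m ≤ Nat.count Nat.Prime N := by
    by_contra hcon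
    push_neg at hcon
    have hcl := count_lower N (by omega)
    have hcm : (Nat.count Nat.Prime N : ℝ) + 2 ≤ (m : ℝ) + 1 := by
      have : Nat.count Nat.Prime N + 1 ≤ m := hcon
      have := (Nat.cast_le (α := ℝ)).2 this
      push_cast at this; linarith
    have hlogNN : Real.log (N : ℝ) ≤ (1 + ε) * Real.log m := by
      calc Real.log (N : ℝ) ≤ Real.log ((m : ℝ) ^ (1 + ε)) :=
            Real.log_le_log (by exact_mod_cast (by omega : 0 < N)) hNle
        _ = (1 + ε) * Real.log m := Real.log_rpow hm0 _
    have hlogm0 : 0 ≤ Real.log (m : ℝ) := Real.log_nonneg hm1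
    have hlogmb : Real.log (m : ℝ) ≤ (1 / (16 * (1 + ε))) * (m : ℝ) ^ ε := by
      rw [Real.norm_eq_abs, Real.norm_eq_abs, abs_of_nonneg hlogm0,
        abs_of_nonneg (Real.rpow_nonneg hm0.le _)] at hlogm
      exact hlogm
    have hmul : (m : ℝ) * (m : ℝ) ^ ε = (m : ℝ) ^ (1 + ε) := by
      rw [Real.rpow_add hm0, Real.rpow_one]
    have hlogN0 : 0 ≤ Real.log (N : ℝ) := Real.log_nonneg (by
      exact_mod_cast (by omega : 1 ≤ N))
    have hchain : ((N : ℝ) - 1) / 2 ≤ ((m : ℝ) + 1) * ((1 + ε) * Real.log m) := by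
      calc ((N : ℝ) - 1) / 2 ≤ (Nat.count Nat.Prime N + 2) * Real.log N := hcl
        _ ≤ ((m : ℝ) + 1) * Real.log N := by
            apply mul_le_mul_of_nonneg_right hcm hlogN0
        _ ≤ ((m : ℝ) + 1) * ((1 + ε) * Real.log m) := by
            apply mul_le_mul_of_nonneg_left hlogNN (by positivity)
    have h2m : (m : ℝ) + 1 ≤ 2 * m := by linarith
    have hfin : ((m : ℝ) ^ (1 + ε) - 2) / 2 ≤ (1 / 4) * (m : ℝ) ^ (1 + ε) := by
      calc ((m : ℝ) ^ (1 + ε) - 2) / 2 ≤ ((N : ℝ) - 1) / 2 := by linarith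
        _ ≤ ((m : ℝ) + 1) * ((1 + ε) * Real.log m) := hchain
        _ ≤ (2 * m) * ((1 + ε) * ((1 / (16 * (1 + ε))) * (m : ℝ) ^ ε)) := by
            apply mul_le_mul h2m _ (by positivity) (by positivity)
            apply mul_le_mul_of_nonneg_left hlogmb (by positivity)
        _ = (1 / 8) * ((m : ℝ) * (m : ℝ) ^ ε) := by field_simp; ring
        _ = (1 / 8) * (m : ℝ) ^ (1 + ε) := by rw [hmul]
        _ ≤ (1 / 4) * (m : ℝ) ^ (1 + ε) := by nlinarith [Real.rpow_nonneg hm0.le (1 + ε)]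
    nlinarith [hrpow16]
  -- conclude
  have hlt : Nat.nth Nat.Prime (m - 1) < N := Nat.nth_lt_of_lt_count (by omega)
  have : pseq m < N := hlt
  calc (pseq m : ℝ) ≤ (N : ℝ) := by exact_mod_cast this.le
    _ ≤ (m : ℝ) ^ (1 + ε) := hNle

lemma le_pseq (m : ℕ) : m ≤ pseq m := by
  cases m with
  | zero => exact Nat.zero_le _
  | succ i =>
    have := Nat.add_two_le_nth_prime i
    simpa [pseq] using by omega

lemma le_pk (k n : ℕ) : n ≤ pk k n := by
  induction k with
  | zero => simp [pk]
  | succ k ih =>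
    calc n ≤ pk k n := ih
      _ ≤ pseq (pk k n) := le_pseq _
      _ = pk (k + 1) n := by
          show pseq (pseq^[k] n) = pseq^[k + 1] n
          rw [Function.iterate_succ_apply']

lemma pk_le (k : ℕ) : ∀ ε : ℝ, 0 < ε → ∀ᶠ n : ℕ in atTop, (pk k n : ℝ) ≤ (n : ℝ) ^ (1 + ε) := by
  induction k with
  | zero =>
    intro ε hε
    filter_upwards [eventually_ge_atTop 1] with n hn
    have h1 : (1 : ℝ) ≤ n := by exact_mod_cast hn
    calc (pk 0 n : ℝ) = (n : ℝ) ^ (1 : ℝ) := by simp [pk]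
      _ ≤ (n : ℝ) ^ (1 + ε) := Real.rpow_le_rpow_of_exponent_le h1 (by linarith)
  | succ k ih =>
    intro ε hε
    set δ := Real.sqrt (1 + ε) - 1 with hδdef
    have hsq : 1 < Real.sqrt (1 + ε) :=
      (Real.lt_sqrt (by norm_num)).2 (by nlinarith)
    have hδ : 0 < δ := by rw [hδdef]; linarith
    have hδδ : (1 + δ) * (1 + δ) = 1 + ε := by
      have h1 : 1 + δ = Real.sqrt (1 + ε) := by rw [hδdef]; ring
      rw [h1]; exact Real.mul_self_sqrt (by linarith)
    obtain ⟨M, hM⟩ := eventually_atTop.1 (pseq_le δ hδ)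
    have hpk_tend : Tendsto (fun n => pk k n) atTop atTop :=
      tendsto_atTop_mono (le_pk k) tendsto_id
    filter_upwards [ih δ hδ, hpk_tend.eventually (eventually_ge_atTop M),
      eventually_ge_atTop 1] with n hn hMn hn1
    have h1n : (1 : ℝ) ≤ n := by exact_mod_cast hn1
    have hstep : pk (k + 1) n = pseq (pk k n) := by
      show pseq^[k + 1] n = pseq (pseq^[k] n)
      rw [Function.iterate_succ_apply']
    calc (pk (k + 1) n : ℝ) = (pseq (pk k n) : ℝ) := by rw [hstep]
      _ ≤ (pk k n : ℝ) ^ (1 + δ) := hM _ hMn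
      _ ≤ ((n : ℝ) ^ (1 + δ)) ^ (1 + δ) :=
          Real.rpow_le_rpow (by positivity) hn (by linarith)
      _ = (n : ℝ) ^ ((1 + δ) * (1 + δ)) := (Real.rpow_mul (by positivity) _ _).symm
      _ = (n : ℝ) ^ (1 + ε) := by rw [hδδ]

theorem iterated_prime_convergence_exponent (k : ℕ) :
    Filter.limsup (fun n : ℕ => Real.log n / Real.log (pk k n)) atTop = 1 ∧
    (∀ α : ℝ, 1 < α → Summable (fun n : ℕ => (pk k (n + 1) : ℝ) ^ (-α))) ∧
    (∀ α : ℝ, α < 1 → ¬ Summable (fun n : ℕ => (pk k (n + 1) : ℝ) ^ (-α))) := by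
  refine ⟨?_, ?_, ?_⟩
  · -- limsup = 1 via Tendsto
    have htend : Tendsto (fun n : ℕ => Real.log n / Real.log (pk k n)) atTop (𝓝 1) := by
      rw [Metric.tendsto_atTop]
      intro ε hε
      have hev : ∀ᶠ n : ℕ in atTop,
          dist (Real.log n / Real.log (pk k n)) 1 < ε := by
        filter_upwards [pk_le k ε hε, eventually_ge_atTop 2] with n hub hn2
        have h1n : (1 : ℝ) < n := by exact_mod_cast (by omega : 1 < n)
        have hL : 0 < Real.log n := Real.log_pos h1n
        have hnpk : (n : ℝ) ≤ (pk k n : ℝ) := by exact_mod_cast le_pk k n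
        have hLP : Real.log n ≤ Real.log (pk k n) :=
          Real.log_le_log (by linarith) hnpk
        have hP : 0 < Real.log (pk k n) := lt_of_lt_of_le hL hLP
        have hup : Real.log (pk k n) ≤ (1 + ε) * Real.log n := by
          calc Real.log (pk k n) ≤ Real.log ((n : ℝ) ^ (1 + ε)) :=
                Real.log_le_log (by linarith) hub
            _ = (1 + ε) * Real.log n := Real.log_rpow (by linarith) _
        have hf1 : Real.log n / Real.log (pk k n) ≤ 1 :=
          div_le_one_of_le₀ hLP hP.le
        have hf2 : 1 / (1 + ε) ≤ Real.log n / Real.log (pk k n) := by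
          rw [div_le_div_iff₀ (by linarith) hP]
          nlinarith
        have hdist : dist (Real.log n / Real.log (pk k n)) 1 =
            1 - Real.log n / Real.log (pk k n) := by
          rw [Real.dist_eq, abs_of_nonpos (by linarith)]; ring
        have heq : 1 - 1 / (1 + ε) = ε / (1 + ε) := by field_simp; ring
        have hlt : ε / (1 + ε) < ε := div_lt_self hε (by linarith)
        rw [hdist]; linarith
      exact eventually_atTop.1 hev
    exact htend.limsup_eq
  · -- summable for α > 1
    intro α hα
    have h1 : Summable (fun n : ℕ => (n : ℝ) ^ (-α)) :=
      Real.summable_nat_rpow.2 (by linarith)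
    have hs : Summable (fun n : ℕ => ((n + 1 : ℕ) : ℝ) ^ (-α)) :=
      (summable_nat_add_iff 1).2 h1
    refine Summable.of_nonneg_of_le
      (fun n => Real.rpow_nonneg (Nat.cast_nonneg _) _) (fun n => ?_) hs
    refine Real.rpow_le_rpow_of_nonpos (by positivity) ?_ (by linarith)
    exact_mod_cast le_pk k (n + 1)
  · -- not summable for α < 1
    intro α hα hsum
    by_cases hα0 : α ≤ 0
    · have hev := hsum.tendsto_atTop_zero.eventually_lt_const (by norm_num : (0:ℝ) < 1)
      obtain ⟨n, hn⟩ := hev.exists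
      have h1 : (1 : ℝ) ≤ (pk k (n + 1) : ℝ) ^ (-α) := by
        apply Real.one_le_rpow _ (by linarith)
        have h2 : 1 ≤ pk k (n + 1) := le_trans (by omega) (le_pk k (n + 1))
        exact_mod_cast h2
      linarith
    · push_neg at hα0
      set ε := (1 - α) / (2 * α) with hεdef
      have hε : 0 < ε := div_pos (by linarith) (by linarith)
      have hβeq : (1 + ε) * α = (1 + α) / 2 := by
        field_simp [hεdef]; rw [hεdef]; field_simp [hα0.ne']; ring
      have hβ : (1 + ε) * α < 1 := by rw [hβeq]; linarith
      obtain ⟨M, hM⟩ := eventually_atTop.1 (pk_le k ε hε)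
      have hsum2 : Summable (fun n : ℕ => (pk k (n + M + 1) : ℝ) ^ (-α)) := by
        have h := (summable_nat_add_iff
          (f := fun n : ℕ => (pk k (n + 1) : ℝ) ^ (-α)) M).2 hsum
        exact h
      have hcomp : Summable (fun n : ℕ => ((n + M + 1 : ℕ) : ℝ) ^ (-((1 + ε) * α))) := by
        refine Summable.of_nonneg_of_le
          (fun n => Real.rpow_nonneg (Nat.cast_nonneg _) _) (fun n => ?_) hsum2
        have hub := hM (n + M + 1) (by omega)
        have hpkpos : (0 : ℝ) < (pk k (n + M + 1) : ℝ) := by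
          have : 1 ≤ pk k (n + M + 1) :=
            le_trans (by omega) (le_pk k (n + M + 1))
          exact_mod_cast this
        calc ((n + M + 1 : ℕ) : ℝ) ^ (-((1 + ε) * α))
            = (((n + M + 1 : ℕ) : ℝ) ^ (1 + ε)) ^ (-α) := by
              rw [← Real.rpow_mul (by positivity)]; congr 1; ring
          _ ≤ (pk k (n + M + 1) : ℝ) ^ (-α) :=
              Real.rpow_le_rpow_of_nonpos hpkpos hub (by linarith)
      have hfin : Summable (fun n : ℕ => (n : ℝ) ^ (-((1 + ε) * α))) := by
        rw [← summable_nat_add_iff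
          (f := fun n : ℕ => (n : ℝ) ^ (-((1 + ε) * α))) (M + 1)]
        have heq : (fun n : ℕ => ((n + (M + 1) : ℕ) : ℝ) ^ (-((1 + ε) * α))) =
            fun n : ℕ => ((n + M + 1 : ℕ) : ℝ) ^ (-((1 + ε) * α)) := by
          funext n
          congr 1
        rw [heq]; exact hcomp
      have := Real.summable_nat_rpow.1 hfin
      linarith
end

section
/- For any positive integers m, n, there exists a constant c > 0 such that |P^T_m(x) − P^T_n(x)| ≤ c for all x ≥ 1; consequently P^T_m(x) ~ P^T_n(x) as x → ∞. -/
/-!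
Both columns are orbits of the same map `p : k ↦ p_k`, which is monotone with `k < p_k`. As
`p^(n)_m ≥ n`, monotonicity gives `p^(i)_n ≤ p^(i)_{p^(n)_m} = p^(i+n)_m`: beyond its first `n`
terms, the `m`-column dominates the `n`-column shifted by `n`. So `P^T_m(x) ≤ P^T_n(x) + n`, and
symmetrically, hence the counts differ by at most `max m n`; both tend to infinity, so their ratio
tends to `1`.
-/

open Filter Topology

lemma lt_pseq (k : ℕ) : k < pseq k := by
  have := Nat.add_two_le_nth_prime (k - 1)
  unfold pseq
  omega

lemma pseq_mono : Monotone pseq := fun _ _ h =>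
  (Nat.nth_le_nth Nat.infinite_setOfPred_prime).2 (Nat.sub_le_sub_right h 1)

lemma le_iterate_apply {f : ℕ → ℕ} (hf : ∀ k, k < f k) (j n : ℕ) : j ≤ f^[j] n := by
  induction j with
  | zero => exact Nat.zero_le n
  | succ j ih =>
    rw [Function.iterate_succ_apply']
    exact ih.trans_lt (hf _)

lemma iterate_le_iterate_add_apply {f : ℕ → ℕ} (hf : ∀ k, k < f k) (hmono : Monotone f)
    (i m n : ℕ) :
    f^[i] n ≤ f^[i + n] m := by
  rw [Function.iterate_add_apply]
  exact hmono.iterate i (le_iterate_apply hf n m)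

/-- `iterateCount pseq n x` is the paper's `P^T_n(x)`. -/
noncomputable def iterateCount (f : ℕ → ℕ) (n : ℕ) (x : ℝ) : ℕ :=
  Nat.card {j : ℕ | 1 ≤ j ∧ (f^[j] n : ℝ) ≤ x}

namespace iterateCount

variable {f : ℕ → ℕ}

lemma finite (hf : ∀ k, k < f k) (n : ℕ) (x : ℝ) :
    {j : ℕ | 1 ≤ j ∧ (f^[j] n : ℝ) ≤ x}.Finite :=
  (Set.finite_Icc 1 ⌊x⌋₊).subset fun j ⟨hj, hjx⟩ =>
    ⟨hj, Nat.le_floor <| le_trans (by exact_mod_cast le_iterate_apply hf j n) hjx⟩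

lemma le_add (hf : ∀ k, k < f k) (hmono : Monotone f) (m n : ℕ) (x : ℝ) :
    iterateCount f m x ≤ iterateCount f n x + n := by
  set S := {j : ℕ | 1 ≤ j ∧ (f^[j] n : ℝ) ≤ x}
  have hsub : {j : ℕ | 1 ≤ j ∧ (f^[j] m : ℝ) ≤ x} ⊆ Set.Icc 1 n ∪ (· + n) '' S := by
    rintro j ⟨hj, hjx⟩
    rcases le_or_gt j n with hjn | hnj
    · exact Or.inl ⟨hj, hjn⟩
    · obtain ⟨i, rfl⟩ := Nat.exists_eq_add_of_lt hnj
      refine Or.inr ⟨i + 1, ⟨by omega, ?_⟩, by simp only; omega⟩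
      have h := iterate_le_iterate_add_apply hf hmono (i + 1) m n
      rw [show i + 1 + n = n + i + 1 by omega] at h
      exact le_trans (by exact_mod_cast h) hjx
  calc iterateCount f m x
      ≤ (Set.Icc 1 n ∪ (· + n) '' S).ncard :=
        Set.ncard_le_ncard hsub ((Set.finite_Icc 1 n).union ((finite hf n x).image _))
    _ ≤ (Set.Icc 1 n).ncard + ((· + n) '' S).ncard := Set.ncard_union_le _ _
    _ ≤ n + iterateCount f n x := by
        gcongr
        · simp [← Finset.coe_Icc, Set.ncard_coe_finset]
        · exact Set.ncard_image_le (finite hf n x)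
    _ = iterateCount f n x + n := add_comm _ _

lemma abs_sub_le (hf : ∀ k, k < f k) (hmono : Monotone f) (m n : ℕ) (x : ℝ) :
    |(iterateCount f m x : ℝ) - iterateCount f n x| ≤ max m n := by
  have hmn : (iterateCount f m x : ℝ) ≤ iterateCount f n x + n := by
    exact_mod_cast le_add hf hmono m n x
  have hnm : (iterateCount f n x : ℝ) ≤ iterateCount f m x + m := by
    exact_mod_cast le_add hf hmono n m x
  rw [abs_sub_le_iff]
  constructor <;> push_cast <;> linarith [le_max_left (m : ℝ) n, le_max_right (m : ℝ) n]

lemma le_of_iterate_le (hf : ∀ k, k < f k) {K n : ℕ} {x : ℝ}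
    (hK : (f^[K] n : ℝ) ≤ x) : K ≤ iterateCount f n x := by
  have hmono : Monotone fun j => f^[j] n := fun _ _ h =>
    Function.monotone_iterate_of_id_le (fun k => (hf k).le) h n
  have hsub : Set.Icc 1 K ⊆ {j : ℕ | 1 ≤ j ∧ (f^[j] n : ℝ) ≤ x} :=
    fun j ⟨hj, hjK⟩ => ⟨hj, le_trans (by exact_mod_cast hmono hjK) hK⟩
  refine le_trans ?_ (Set.ncard_le_ncard hsub (finite hf n x))
  simp [← Finset.coe_Icc, Set.ncard_coe_finset]

lemma tendsto_atTop (hf : ∀ k, k < f k) (n : ℕ) :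
    Tendsto (fun x : ℝ => (iterateCount f n x : ℝ)) atTop atTop := by
  refine Filter.tendsto_atTop.2 fun b => ?_
  filter_upwards [eventually_ge_atTop (f^[⌈b⌉₊] n : ℝ)] with x hx
  exact (Nat.le_ceil b).trans (by exact_mod_cast le_of_iterate_le hf hx)

end iterateCount

lemma tendsto_div_of_abs_sub_le {α : Type*} {l : Filter α} {a b : α → ℝ} {C : ℝ}
    (hab : ∀ x, |a x - b x| ≤ C) (hb : Tendsto b l atTop) :
    Tendsto (fun x => a x / b x) l (𝓝 1) := by
  have hbig : (a - b) =O[l] (fun _ => (1 : ℝ)) :=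
    Asymptotics.isBigO_of_le' l fun x => by simpa using hab x
  have hlittle : (fun _ => (1 : ℝ)) =o[l] b :=
    (Asymptotics.isLittleO_one_left_iff ℝ).2 (tendsto_norm_atTop_atTop.comp hb)
  exact (Asymptotics.isEquivalent_iff_tendsto_one
    (hb.eventually_ne_atTop 0)).1 (hbig.trans_isLittleO hlittle)

theorem iterated_prime_columns_counting_general (m n : ℕ) :
    (∃ c : ℝ, 0 < c ∧ ∀ x : ℝ, 1 ≤ x →
      |(Nat.card {j : ℕ | 1 ≤ j ∧ (pk j m : ℝ) ≤ x} : ℝ) -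
        (Nat.card {j : ℕ | 1 ≤ j ∧ (pk j n : ℝ) ≤ x} : ℝ)| ≤ c) ∧
    Tendsto (fun x : ℝ =>
        (Nat.card {j : ℕ | 1 ≤ j ∧ (pk j m : ℝ) ≤ x} : ℝ) /
          (Nat.card {j : ℕ | 1 ≤ j ∧ (pk j n : ℝ) ≤ x} : ℝ)) atTop (𝓝 1) := by
  change (∃ c : ℝ, 0 < c ∧ ∀ x : ℝ, 1 ≤ x →
      |(iterateCount pseq m x : ℝ) - iterateCount pseq n x| ≤ c) ∧
    Tendsto (fun x : ℝ => (iterateCount pseq m x : ℝ) / iterateCount pseq n x) atTop (𝓝 1)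
  have hbound := iterateCount.abs_sub_le lt_pseq pseq_mono m n
  refine ⟨⟨max m n + 1, by positivity, fun x _ => (hbound x).trans (by linarith)⟩, ?_⟩
  exact tendsto_div_of_abs_sub_le hbound (iterateCount.tendsto_atTop lt_pseq n)

theorem iterated_prime_columns_counting (m n : ℕ) (hm : 1 ≤ m) (hn : 1 ≤ n) :
    (∃ c : ℝ, 0 < c ∧ ∀ x : ℝ, 1 ≤ x →
      |(Nat.card {j : ℕ | 1 ≤ j ∧ (pk j m : ℝ) ≤ x} : ℝ) -
        (Nat.card {j : ℕ | 1 ≤ j ∧ (pk j n : ℝ) ≤ x} : ℝ)| ≤ c) ∧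
    Tendsto (fun x : ℝ =>
        (Nat.card {j : ℕ | 1 ≤ j ∧ (pk j m : ℝ) ≤ x} : ℝ) /
          (Nat.card {j : ℕ | 1 ≤ j ∧ (pk j n : ℝ) ≤ x} : ℝ)) atTop (𝓝 1) :=
  iterated_prime_columns_counting_general m n
end

section
/- For every positive integer n, P^T_n(x) = o(log x) as x → ∞; moreover log P^T_n(x) ~ log log x as x → ∞. -/
open Filter Topology

section AuxiliaryLemmas
open Finset


lemma log16_lt_3 : Real.log 16 < 3 := by
  have h2 : Real.log 2 < 0.6931471808 := Real.log_two_lt_d9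
  have : (16:ℝ) = 2^4 := by norm_num
  rw [this, Real.log_pow]
  push_cast
  nlinarith

lemma sqrt_mul_log_le (x : ℝ) (hx : 1 ≤ x) :
    Real.sqrt x * Real.log x ≤ 2 * x := by
  have hs : 0 < Real.sqrt x := Real.sqrt_pos.2 (by linarith)
  have hss : Real.sqrt x * Real.sqrt x = x := Real.mul_self_sqrt (by linarith)
  have h1 : Real.log x = 2 * Real.log (Real.sqrt x) := by
    have : Real.sqrt x ^ 2 = x := by rw [sq, hss]
    calc Real.log x = Real.log (Real.sqrt x ^ 2) := by rw [this]
      _ = 2 * Real.log (Real.sqrt x) := by rw [Real.log_pow]; push_cast; ring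
  have h2 : Real.log (Real.sqrt x) ≤ Real.sqrt x - 1 := Real.log_le_sub_one_of_pos hs
  nlinarith

/-- Chebyshev-type upper bound for the prime counting function. -/
lemma pi'_mul_log_le (n : ℕ) (hn : 2 ≤ n) :
    (Nat.primeCounting' n : ℝ) * Real.log n ≤ 6 * n := by
  classical
  set s := n.primesBelow with hs
  set b := s.filter (fun p => Nat.sqrt n < p) with hb
  set a := s.filter (fun p => ¬ Nat.sqrt n < p) with hadef
  have hcard : a.card + b.card = s.card := by
    rw [hadef, hb, add_comm]
    exact Finset.card_filter_add_card_filter_not (p := fun p => Nat.sqrt n < p)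
  have ha : a.card ≤ Nat.sqrt n + 1 := by
    have hsub : a ⊆ Finset.range (Nat.sqrt n + 1) := by
      intro p hp
      simp only [hadef, Finset.mem_filter, not_lt] at hp
      simp only [Finset.mem_range]
      omega
    simpa using Finset.card_le_card hsub
  -- n ^ b.card ≤ 16 ^ n
  have hprod : ∏ p ∈ b, p ≤ primorial n := by
    apply Nat.le_of_dvd (primorial_pos n)
    apply Finset.prod_dvd_prod_of_subset
    intro p hp
    simp only [hb, hs, Finset.mem_filter, Nat.mem_primesBelow] at hp
    simp only [primorial, Finset.mem_filter, Finset.mem_range]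
    exact ⟨by omega, hp.1.2⟩
  have hpow : n ^ b.card ≤ 16 ^ n := by
    calc n ^ b.card ≤ ∏ p ∈ b, p ^ 2 := by
          apply Finset.pow_card_le_prod
          intro p hp
          simp only [hb, Finset.mem_filter] at hp
          exact (Nat.sqrt_lt'.1 hp.2).le
      _ = (∏ p ∈ b, p) ^ 2 := by rw [Finset.prod_pow]
      _ ≤ (4 ^ n) ^ 2 := Nat.pow_le_pow_left (hprod.trans (primorial_le_4_pow n)) 2
      _ = 16 ^ n := by
          rw [← Nat.pow_mul, Nat.mul_comm, Nat.pow_mul]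
  have hlogn : (0:ℝ) ≤ Real.log n := Real.log_nonneg (by exact_mod_cast Nat.one_le_iff_ne_zero.2 (by omega))
  have hblog : (b.card : ℝ) * Real.log n ≤ 3 * n := by
    have h1 : ((n:ℝ)) ^ b.card ≤ (16:ℝ) ^ n := by exact_mod_cast hpow
    have h2 : Real.log ((n:ℝ) ^ b.card) ≤ Real.log ((16:ℝ) ^ n) :=
      Real.log_le_log (by positivity) h1
    rw [Real.log_pow, Real.log_pow] at h2
    have h3 : (n:ℝ) * Real.log 16 ≤ (n:ℝ) * 3 := by
      apply mul_le_mul_of_nonneg_left (le_of_lt log16_lt_3) (by positivity)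
    nlinarith
  have halog : (a.card : ℝ) * Real.log n ≤ 3 * n := by
    have h1 : (a.card : ℝ) ≤ Real.sqrt n + 1 := by
      have := Real.nat_sqrt_le_real_sqrt (a := n)
      have h2 : (a.card : ℝ) ≤ (Nat.sqrt n : ℝ) + 1 := by exact_mod_cast ha
      linarith
    have h2 : (Real.sqrt n + 1) * Real.log n ≤ 2 * n + Real.log n := by
      have hn1 : (1:ℝ) ≤ (n:ℝ) := by exact_mod_cast Nat.one_le_iff_ne_zero.2 (by omega)
      nlinarith [sqrt_mul_log_le n hn1]
    have h3 : Real.log n ≤ (n:ℝ) - 1 := Real.log_le_sub_one_of_pos (by positivity)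
    have h4 : (a.card:ℝ) * Real.log n ≤ (Real.sqrt n + 1) * Real.log n :=
      mul_le_mul_of_nonneg_right h1 hlogn
    have hnpos : (0:ℝ) < (n:ℝ) := by exact_mod_cast (show 0 < n by omega)
    nlinarith
  have hπ : (Nat.primeCounting' n : ℝ) = (a.card : ℝ) + b.card := by
    rw [← Nat.primesBelow_card_eq_primeCounting', ← hs, ← hcard]; push_cast; ring
  rw [hπ]
  nlinarith

/-- Lower bound on the `m`-th prime: `m log m ≤ 6 p_m`. -/
lemma nth_prime_lower (m : ℕ) : (m:ℝ) * Real.log m ≤ 6 * (Nat.nth Nat.Prime m) := by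
  rcases Nat.eq_zero_or_pos m with hm | hm
  · subst hm
    simp only [Nat.cast_zero, zero_mul]
    positivity
  · set q := Nat.nth Nat.Prime m with hq
    have hq2 : m + 2 ≤ q := Nat.add_two_le_nth_prime m
    have h1 : (Nat.primeCounting' q : ℝ) * Real.log q ≤ 6 * q :=
      pi'_mul_log_le q (by omega)
    rw [hq, Nat.primeCounting'_nth_eq] at h1
    have h2 : Real.log m ≤ Real.log q :=
      Real.log_le_log (by exact_mod_cast hm) (by exact_mod_cast (by omega : m ≤ q))
    have h3 : (m:ℝ) * Real.log m ≤ (m:ℝ) * Real.log q :=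
      mul_le_mul_of_nonneg_left h2 (by positivity)
    exact h3.trans h1

lemma centralBinom_le_pow (n : ℕ) (hn : 1 ≤ n) :
    Nat.centralBinom n ≤ (2*n) ^ (Nat.primeCounting' (2*n+1)) := by
  classical
  have h0 : Nat.centralBinom n ≠ 0 := (Nat.centralBinom_pos n).ne'
  have h2n : 0 < 2 * n := by omega
  have hsub : (Nat.centralBinom n).primeFactors ⊆ Nat.primesBelow (2*n+1) := by
    intro p hp
    have hpp : p.Prime := Nat.prime_of_mem_primeFactors hp
    have hdvd : p ∣ Nat.centralBinom n := Nat.dvd_of_mem_primeFactors hp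
    have hν : 1 ≤ (Nat.centralBinom n).factorization p :=
      (Nat.Prime.factorization_pos_of_dvd hpp h0 hdvd)
    have hple : p ≤ 2 * n := by
      have := Nat.pow_factorization_choose_le (p := p) (n := 2*n) (k := n) h2n
      calc p = p ^ 1 := (pow_one p).symm
        _ ≤ p ^ (Nat.centralBinom n).factorization p :=
            Nat.pow_le_pow_right hpp.pos hν
        _ ≤ 2 * n := by rwa [Nat.centralBinom] at *
    exact Nat.mem_primesBelow.2 ⟨by omega, hpp⟩
  calc Nat.centralBinom n
      = ∏ p ∈ (Nat.centralBinom n).primeFactors, p ^ (Nat.centralBinom n).factorization p := by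
        conv_lhs => rw [← Nat.factorization_prod_pow_eq_self h0]
        rw [Nat.factorization_prod_pow_eq_self h0]
        rw [← Nat.support_factorization]
        exact (Nat.factorization_prod_pow_eq_self h0).symm
    _ ≤ (2*n) ^ (Nat.centralBinom n).primeFactors.card := by
        apply Finset.prod_le_pow_card
        intro p hp
        have := Nat.pow_factorization_choose_le (p := p) (n := 2*n) (k := n) h2n
        rwa [Nat.centralBinom] at *
    _ ≤ (2*n) ^ (Nat.primeCounting' (2*n+1)) := by
        apply Nat.pow_le_pow_right h2n
        rw [← Nat.primesBelow_card_eq_primeCounting']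
        exact Finset.card_le_card hsub

/-- Chebyshev-type lower bound for the prime counting function. -/
lemma le_pi'_mul_log (n : ℕ) (hn : 30 ≤ n) :
    (n:ℝ) ≤ (Nat.primeCounting' (2*n+1)) * Real.log (2*n) := by
  have h1 : 4 ^ n < n * (2*n) ^ (Nat.primeCounting' (2*n+1)) :=
    lt_of_lt_of_le (Nat.four_pow_lt_mul_centralBinom n (by omega))
      (Nat.mul_le_mul_left n (centralBinom_le_pow n (by omega)))
  set k := Nat.primeCounting' (2*n+1) with hk
  have h2 : (4:ℝ) ^ n ≤ (n:ℝ) * (2*n:ℕ) ^ k := by exact_mod_cast h1.le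
  have hnpos : (0:ℝ) < n := by exact_mod_cast (by omega : 0 < n)
  have h3 : Real.log ((4:ℝ)^n) ≤ Real.log ((n:ℝ) * (2*n:ℕ)^k) :=
    Real.log_le_log (by positivity) h2
  rw [Real.log_pow, Real.log_mul (by positivity) (by positivity), Real.log_pow] at h3
  have h2n : ((2*n:ℕ):ℝ) = 2 * (n:ℝ) := by push_cast; ring
  rw [h2n] at h3
  -- log 4 = 2 log 2 > 1.386
  have hlog2 : (0.6931471803:ℝ) < Real.log 2 := Real.log_two_gt_d9
  have hlog4 : Real.log 4 = 2 * Real.log 2 := by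
    rw [show (4:ℝ) = 2^2 by norm_num, Real.log_pow]; push_cast; ring
  -- log n ≤ 2 √n - 2
  have hs : Real.sqrt n * Real.sqrt n = (n:ℝ) := Real.mul_self_sqrt (by positivity)
  have hs54 : (5.4:ℝ) ≤ Real.sqrt n := by
    rw [show (5.4:ℝ) = Real.sqrt (5.4^2) from (Real.sqrt_sq (by norm_num)).symm]
    apply Real.sqrt_le_sqrt
    have : (30:ℝ) ≤ (n:ℝ) := by exact_mod_cast hn
    nlinarith
  have hlogn : Real.log n ≤ 2 * Real.sqrt n - 2 := by
    have h1 : Real.log n = 2 * Real.log (Real.sqrt n) := by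
      have : Real.sqrt n ^ 2 = (n:ℝ) := by rw [sq, hs]
      calc Real.log n = Real.log (Real.sqrt n ^ 2) := by rw [this]
        _ = 2 * Real.log (Real.sqrt n) := by rw [Real.log_pow]; push_cast; ring
    have h2 : Real.log (Real.sqrt n) ≤ Real.sqrt n - 1 :=
      Real.log_le_sub_one_of_pos (by nlinarith)
    linarith
  have hkn : (0:ℝ) ≤ (k:ℝ) * Real.log 2 := by positivity
  have hklog : (k:ℝ) * Real.log (2*(n:ℝ)) = (k:ℝ) * Real.log 2 + (k:ℝ) * Real.log n := by
    rw [Real.log_mul (by norm_num) (by positivity)]; ring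
  nlinarith [hs54, hs]

set_option maxHeartbeats 1000000 in
/-- Upper bound on the `m`-th prime: `p_m ≤ 40 m log m` for `m ≥ 300`. -/
lemma nth_prime_upper (m : ℕ) (hm : 300 ≤ m) :
    (Nat.nth Nat.Prime m : ℝ) ≤ 40 * m * Real.log m := by
  set y : ℝ := (m:ℝ) + 1 with hy
  have hy301 : (301:ℝ) ≤ y := by
    have : (300:ℝ) ≤ (m:ℝ) := by exact_mod_cast hm
    simp [hy]; linarith
  have hypos : (0:ℝ) < y := by linarith
  -- log y ≥ 1
  have hlogy1 : (1:ℝ) ≤ Real.log y := by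
    rw [Real.le_log_iff_exp_le hypos]
    have := Real.exp_one_lt_d9
    linarith
  -- log y ≤ 2 √y - 2, √y ≥ 16
  have hs : Real.sqrt y * Real.sqrt y = y := Real.mul_self_sqrt (by positivity)
  have hs16 : (16:ℝ) ≤ Real.sqrt y := by
    rw [show (16:ℝ) = Real.sqrt (16^2) from (Real.sqrt_sq (by norm_num)).symm]
    apply Real.sqrt_le_sqrt; nlinarith
  have hlogy : Real.log y ≤ 2 * Real.sqrt y - 2 := by
    have h1 : Real.log y = 2 * Real.log (Real.sqrt y) := by
      have : Real.sqrt y ^ 2 = y := by rw [sq, hs]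
      calc Real.log y = Real.log (Real.sqrt y ^ 2) := by rw [this]
        _ = 2 * Real.log (Real.sqrt y) := by rw [Real.log_pow]; push_cast; ring
    have h2 : Real.log (Real.sqrt y) ≤ Real.sqrt y - 1 :=
      Real.log_le_sub_one_of_pos (by nlinarith)
    linarith
  set t : ℝ := 4 * y * Real.log y with ht
  have htpos : (0:ℝ) < t := by positivity
  have ht1000 : (1000:ℝ) ≤ t := by nlinarith
  set N : ℕ := ⌈t⌉₊ with hN
  have hNt : (N:ℝ) ≤ t + 1 := le_of_lt (Nat.ceil_lt_add_one htpos.le)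
  have htN : t ≤ (N:ℝ) := Nat.le_ceil t
  have hN30 : 30 ≤ N := by
    have : (30:ℝ) ≤ (N:ℝ) := by linarith
    exact_mod_cast this
  have hpi := le_pi'_mul_log N hN30
  -- 2N ≤ y^2, hence log (2N) ≤ 2 log y
  have h2Ny : 2 * (N:ℝ) ≤ y^2 := by
    have hcube : 16 * (Real.sqrt y * Real.sqrt y) ≤ Real.sqrt y * (Real.sqrt y * Real.sqrt y) := by
      have h0 : (0:ℝ) ≤ Real.sqrt y * Real.sqrt y := by nlinarith
      nlinarith [mul_le_mul_of_nonneg_right hs16 h0]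
    nlinarith [hs, hs16, hNt, hlogy, hcube]
  have hlog2N : Real.log (2 * (N:ℝ)) ≤ 2 * Real.log y := by
    have : Real.log (2 * (N:ℝ)) ≤ Real.log (y^2) :=
      Real.log_le_log (by positivity) h2Ny
    rwa [Real.log_pow, Nat.cast_ofNat] at this
  have hlog2Npos : (0:ℝ) < Real.log (2*(N:ℝ)) := by
    rw [show (0:ℝ) = Real.log 1 from (Real.log_one).symm]
    apply Real.log_lt_log (by norm_num)
    have : (1000:ℝ) ≤ (N:ℝ) := by linarith
    linarith
  -- m + 1 ≤ π'(2N+1)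
  have hmain : (m:ℝ) + 1 ≤ (Nat.primeCounting' (2*N+1) : ℝ) := by
    have hstep : ((m:ℝ)+1) * Real.log (2*(N:ℝ)) ≤ (N:ℝ) := by
      calc ((m:ℝ)+1) * Real.log (2*(N:ℝ)) ≤ y * (2 * Real.log y) := by
            apply mul_le_mul (by simp [hy]) hlog2N hlog2Npos.le hypos.le
        _ ≤ t := by
            rw [ht]
            nlinarith [mul_nonneg hypos.le (le_trans zero_le_one hlogy1)]
        _ ≤ (N:ℝ) := htN
    by_contra hcon
    push_neg at hcon
    have : (Nat.primeCounting' (2*N+1) : ℝ) * Real.log (2*(N:ℝ)) <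
        ((m:ℝ)+1) * Real.log (2*(N:ℝ)) :=
      mul_lt_mul_of_pos_right hcon hlog2Npos
    linarith
  have hmlt : m + 1 ≤ Nat.primeCounting' (2*N+1) := by exact_mod_cast hmain
  -- hence nth Prime m < 2N+1
  have hnth : Nat.nth Nat.Prime m < 2*N+1 := by
    by_contra hcon
    push_neg at hcon
    have := Nat.monotone_primeCounting' hcon
    rw [Nat.primeCounting'_nth_eq] at this
    omega
  -- conclude
  have h1 : (Nat.nth Nat.Prime m : ℝ) ≤ 2*(N:ℝ) := by
    have : Nat.nth Nat.Prime m ≤ 2*N := by omega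
    exact_mod_cast this
  have hlogm : (1:ℝ) ≤ Real.log m := by
    rw [Real.le_log_iff_exp_le (by positivity)]
    have := Real.exp_one_lt_d9
    have : (3:ℝ) ≤ (m:ℝ) := by exact_mod_cast (by omega : 3 ≤ m)
    nlinarith [Real.exp_one_lt_d9]
  have hyle : y ≤ 2*(m:ℝ) := by
    have : (1:ℝ) ≤ (m:ℝ) := by exact_mod_cast (by omega : 1 ≤ m)
    simp [hy]; linarith
  have hlogyle : Real.log y ≤ 2 * Real.log m := by
    have h2 : y ≤ (m:ℝ)^2 := by
      have : (2:ℝ) ≤ (m:ℝ) := by exact_mod_cast (by omega : 2 ≤ m)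
      nlinarith
    have := Real.log_le_log hypos h2
    rwa [Real.log_pow, Nat.cast_ofNat] at this
  have hmpos : (0:ℝ) < (m:ℝ) := by exact_mod_cast (by omega : 0 < m)
  calc (Nat.nth Nat.Prime m : ℝ) ≤ 2*(N:ℝ) := h1
    _ ≤ 2*t + 2 := by linarith
    _ = 8 * y * Real.log y + 2 := by rw [ht]; ring
    _ ≤ 8 * (2*(m:ℝ)) * (2 * Real.log m) + 2 := by
        have h0 : (0:ℝ) ≤ Real.log y := by linarith
        have := mul_le_mul hyle hlogyle h0 (by positivity)
        nlinarith
    _ ≤ 40 * m * Real.log m := by nlinarith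



lemma pseq_ge {m : ℕ} (hm : 1 ≤ m) : m + 1 ≤ pseq m := by
  have := Nat.add_two_le_nth_prime (m - 1)
  unfold pseq
  omega

lemma pk_succ (k n : ℕ) : pk (k+1) n = pseq (pk k n) := Function.iterate_succ_apply' _ _ _

lemma pk_ge (n : ℕ) (hn : 1 ≤ n) : ∀ k, k + 1 ≤ pk k n := by
  intro k
  induction k with
  | zero => simpa [pk]
  | succ k ih =>
    rw [pk_succ]
    have := pseq_ge (m := pk k n) (by omega)
    omega

lemma pk_lt_succ (n : ℕ) (hn : 1 ≤ n) (k : ℕ) : pk k n < pk (k+1) n := by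
  rw [pk_succ]
  have h1 := pk_ge n hn k
  have := pseq_ge (m := pk k n) (by omega)
  omega

lemma pk_strictMono (n : ℕ) (hn : 1 ≤ n) : StrictMono (fun k => pk k n) :=
  strictMono_nat_of_lt_succ (pk_lt_succ n hn)

lemma pk_pos (n : ℕ) (hn : 1 ≤ n) (k : ℕ) : 1 ≤ pk k n := by
  have := pk_ge n hn k; omega

lemma pk_tendsto (n : ℕ) (hn : 1 ≤ n) :
    Tendsto (fun k => ((pk k n : ℝ))) atTop atTop := by
  refine tendsto_atTop_mono (f := fun k : ℕ => (k:ℝ)) ?_ (tendsto_natCast_atTop_atTop (R := ℝ))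
  intro k
  exact_mod_cast (by have := pk_ge n hn k; omega : k ≤ pk k n)

/-- `L n k = log (pk k n)`. -/
noncomputable def Lf (n k : ℕ) : ℝ := Real.log (pk k n)

lemma Lf_nonneg (n : ℕ) (hn : 1 ≤ n) (k : ℕ) : 0 ≤ Lf n k :=
  Real.log_nonneg (by exact_mod_cast pk_pos n hn k)

lemma Lf_mono (n : ℕ) (hn : 1 ≤ n) : Monotone (Lf n) := by
  intro i j hij
  exact Real.log_le_log (by exact_mod_cast pk_pos n hn i)
    (by exact_mod_cast (pk_strictMono n hn).monotone hij)

/-- Growth: eventually `L (j+1) ≥ L j + c`. -/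
lemma Lf_add_le_eventually (n : ℕ) (hn : 1 ≤ n) (c : ℝ) :
    ∀ᶠ j in atTop, Lf n j + c ≤ Lf n (j+1) := by
  have hev : ∀ᶠ j in atTop, (max 3 (Real.exp (24 * Real.exp c)) : ℝ) ≤ (pk j n : ℝ) :=
    (pk_tendsto n hn).eventually_ge_atTop _
  filter_upwards [hev] with j hj
  set m := pk j n with hm
  have hm3 : (3:ℝ) ≤ (m:ℝ) := le_trans (le_max_left _ _) hj
  have hm3' : 3 ≤ m := by exact_mod_cast hm3
  have hmlog : 24 * Real.exp c ≤ Real.log m := by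
    rw [← Real.log_exp (24 * Real.exp c)]
    exact Real.log_le_log (Real.exp_pos _) (le_trans (le_max_right _ _) hj)
  have hcast : ((m - 1 : ℕ) : ℝ) = (m:ℝ) - 1 := by
    have : 1 ≤ m := by omega
    push_cast [this]; ring
  -- nth Prime (m-1) ≥ (m-1) log (m-1) / 6
  have hlow := nth_prime_lower (m - 1)
  rw [hcast] at hlow
  have hpk1 : (pk (j+1) n : ℝ) = (Nat.nth Nat.Prime (m-1) : ℝ) := by
    rw [pk_succ]; rfl
  -- (m-1) ≥ m/2 and log (m-1) ≥ log m / 2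
  have hhalf : (m:ℝ)/2 ≤ (m:ℝ) - 1 := by linarith
  have hsqrt : Real.sqrt m ≤ (m:ℝ) - 1 := by
    have h1 : Real.sqrt m * Real.sqrt m = (m:ℝ) := Real.mul_self_sqrt (by positivity)
    nlinarith [Real.sqrt_nonneg (m:ℝ)]
  have hloghalf : Real.log m / 2 ≤ Real.log ((m:ℝ) - 1) := by
    have h1 : Real.log (Real.sqrt m) ≤ Real.log ((m:ℝ)-1) :=
      Real.log_le_log (Real.sqrt_pos.2 (by linarith)) hsqrt
    have h2 : Real.log (Real.sqrt m) = Real.log m / 2 := by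
      rw [Real.log_sqrt (by positivity)]
    linarith
  have hexp : Real.exp c * (m:ℝ) ≤ (Nat.nth Nat.Prime (m-1) : ℝ) := by
    have h1 : ((m:ℝ)/2) * (Real.log m / 2) ≤ ((m:ℝ)-1) * Real.log ((m:ℝ)-1) := by
      apply mul_le_mul hhalf hloghalf (by positivity) (by linarith)
    have h2 : Real.exp c * (m:ℝ) ≤ (m:ℝ) * Real.log m / 4 := by nlinarith [Real.exp_pos c]
    nlinarith
  have hfin : Lf n j + c ≤ Real.log (Nat.nth Nat.Prime (m-1)) := by
    have h1 : Real.log (Real.exp c * m) ≤ Real.log (Nat.nth Nat.Prime (m-1)) :=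
      Real.log_le_log (by positivity) hexp
    rw [Real.log_mul (by positivity) (by positivity), Real.log_exp] at h1
    unfold Lf
    rw [← hm]
    linarith
  rw [show Lf n (j+1) = Real.log (Nat.nth Nat.Prime (m-1)) by unfold Lf; rw [hpk1]]
  exact hfin

lemma Lf_lower (n : ℕ) (hn : 1 ≤ n) (c : ℝ) :
    ∃ J : ℕ, 1 ≤ J ∧ ∀ j, J ≤ j → c * ((j:ℝ) - (J:ℝ)) ≤ Lf n j := by
  obtain ⟨J0, hJ0⟩ := (Lf_add_le_eventually n hn c).exists_forall_of_atTop
  refine ⟨max J0 1, le_max_right _ _, ?_⟩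
  set J := max J0 1 with hJ
  intro j hj
  induction j, hj using Nat.le_induction with
  | base => simpa using Lf_nonneg n hn J
  | succ j hj ih =>
    have h1 := hJ0 j (le_trans (le_max_left _ _) hj)
    push_cast
    have : c * ((j:ℝ) + 1 - (J:ℝ)) = c * ((j:ℝ) - (J:ℝ)) + c := by ring
    rw [this]
    linarith

lemma exp_three_lt : Real.exp 3 < 21 := by
  have h := Real.exp_one_lt_d9
  have h3 : Real.exp 3 = (Real.exp 1)^3 := by
    rw [← Real.exp_nat_mul]; norm_num
  rw [h3]
  have h2 : Real.exp 1 ^ 3 < 2.7182818286^3 :=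
    pow_lt_pow_left₀ h (le_of_lt (Real.exp_pos 1)) (by norm_num)
  nlinarith

lemma Lf_rec (n : ℕ) (hn : 1 ≤ n) :
    ∃ J : ℕ, ∀ j, J ≤ j →
      3 ≤ Lf n j ∧ Lf n (j+1) ≤ 2 * Lf n j ∧
      Lf n (j+1) ≤ Lf n j + Real.log 40 + Real.log (Lf n j) := by
  have hev : ∀ᶠ j in atTop, (7000 : ℝ) ≤ (pk j n : ℝ) :=
    (pk_tendsto n hn).eventually_ge_atTop _
  obtain ⟨J, hJ⟩ := hev.exists_forall_of_atTop
  refine ⟨J, fun j hj => ?_⟩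
  have hm := hJ j hj
  set m := pk j n with hmdef
  have hm7 : (7000:ℝ) ≤ (m:ℝ) := hm
  have hm7' : 7000 ≤ m := by exact_mod_cast hm7
  have hLfj : Lf n j = Real.log m := rfl
  have hlog3 : 3 ≤ Real.log m := by
    rw [Real.le_log_iff_exp_le (by positivity)]
    linarith [exp_three_lt]
  have hcast : ((m - 1 : ℕ) : ℝ) = (m:ℝ) - 1 := by
    push_cast [show 1 ≤ m by omega]; ring
  have hpk1 : (pk (j+1) n : ℝ) = (Nat.nth Nat.Prime (m-1) : ℝ) := by rw [pk_succ]; rfl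
  have hup := nth_prime_upper (m-1) (by omega)
  rw [hcast] at hup
  have hlogm1 : Real.log ((m:ℝ)-1) ≤ Real.log m :=
    Real.log_le_log (by linarith) (by linarith)
  have hlogm1pos : 0 ≤ Real.log ((m:ℝ)-1) := Real.log_nonneg (by linarith)
  have hup2 : (Nat.nth Nat.Prime (m-1) : ℝ) ≤ 40 * (m:ℝ) * Real.log m := by
    calc (Nat.nth Nat.Prime (m-1) : ℝ) ≤ 40 * ((m:ℝ)-1) * Real.log ((m:ℝ)-1) := hup
      _ ≤ 40 * (m:ℝ) * Real.log m := by nlinarith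
  have hnthpos : (0:ℝ) < (Nat.nth Nat.Prime (m-1) : ℝ) := by
    exact_mod_cast (Nat.prime_nth_prime (m-1)).pos
  refine ⟨by rw [hLfj]; exact hlog3, ?_, ?_⟩
  · -- doubling
    have h40 : 40 * (m:ℝ) * Real.log m ≤ (m:ℝ)^2 := by
      have hs : Real.sqrt m * Real.sqrt m = (m:ℝ) := Real.mul_self_sqrt (by positivity)
      have hs80 : (80:ℝ) ≤ Real.sqrt m := by
        rw [show (80:ℝ) = Real.sqrt (80^2) from (Real.sqrt_sq (by norm_num)).symm]
        apply Real.sqrt_le_sqrt; nlinarith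
      have hlogle : Real.log m ≤ 2 * Real.sqrt m - 2 := by
        have h1 : Real.log m = 2 * Real.log (Real.sqrt m) := by
          rw [Real.log_sqrt (by positivity)]; ring
        have h2 : Real.log (Real.sqrt m) ≤ Real.sqrt m - 1 :=
          Real.log_le_sub_one_of_pos (by nlinarith)
        linarith
      nlinarith [mul_le_mul_of_nonneg_right hs80 (le_of_lt (lt_of_lt_of_le (by norm_num : (0:ℝ) < 80) hs80))]
    show Lf n (j+1) ≤ 2 * Lf n j
    unfold Lf
    rw [hpk1, hLfj.symm]
    calc Real.log (Nat.nth Nat.Prime (m-1) : ℝ) ≤ Real.log ((m:ℝ)^2) :=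
          Real.log_le_log hnthpos (hup2.trans h40)
      _ = 2 * Real.log m := by rw [Real.log_pow]; push_cast; ring
      _ = 2 * Lf n j := by rw [hLfj]
  · show Lf n (j+1) ≤ Lf n j + Real.log 40 + Real.log (Lf n j)
    unfold Lf
    rw [hpk1]
    calc Real.log (Nat.nth Nat.Prime (m-1) : ℝ)
        ≤ Real.log (40 * (m:ℝ) * Real.log m) := Real.log_le_log hnthpos hup2
      _ = Real.log 40 + Real.log m + Real.log (Real.log m) := by
          rw [Real.log_mul (by positivity) (by positivity),
            Real.log_mul (by norm_num) (by positivity)]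
      _ = Real.log (pk j n) + Real.log 40 + Real.log (Real.log (pk j n)) := by
          rw [← hmdef]; ring_nf

lemma Lf_exp_bound (n : ℕ) (hn : 1 ≤ n) :
    ∃ D : ℝ, 1 ≤ D ∧ ∀ j, Lf n j ≤ D * 2^j := by
  obtain ⟨J, hJ⟩ := Lf_rec n hn
  refine ⟨max 1 (Lf n J + 1), le_max_left _ _, ?_⟩
  set D := max 1 (Lf n J + 1) with hD
  have hD0 : 0 ≤ D := le_trans zero_le_one (le_max_left _ _)
  have hDJ : Lf n J ≤ D := le_trans (by linarith) (le_max_right _ _)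
  intro j
  induction j with
  | zero =>
    have h1 : Lf n 0 ≤ Lf n J := Lf_mono n hn (Nat.zero_le J)
    simpa using h1.trans hDJ
  | succ j ih =>
    rcases le_or_gt J j with h | h
    · have h2 := (hJ j h).2.1
      have h3 : (0:ℝ) < 2^j := by positivity
      calc Lf n (j+1) ≤ 2 * Lf n j := h2
        _ ≤ 2 * (D * 2^j) := by linarith [mul_le_mul_of_nonneg_left ih (by norm_num : (0:ℝ) ≤ 2)]
        _ = D * 2^(j+1) := by ring
    · have h1 : Lf n (j+1) ≤ Lf n J := Lf_mono n hn (by omega)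
      have h2 : (1:ℝ) ≤ 2^(j+1) := one_le_pow₀ (by norm_num : (1:ℝ) ≤ 2)
      calc Lf n (j+1) ≤ D := h1.trans hDJ
        _ ≤ D * 2^(j+1) := le_mul_of_one_le_right hD0 h2

lemma Lf_sq_bound (n : ℕ) (hn : 1 ≤ n) :
    ∃ D : ℝ, 1 ≤ D ∧ ∀ j, Lf n j ≤ D * ((j:ℝ)+1)^2 := by
  obtain ⟨J, hJ⟩ := Lf_rec n hn
  obtain ⟨D1, hD1, hD1b⟩ := Lf_exp_bound n hn
  set c : ℝ := Real.log 40 + Real.log D1 + 1 with hc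
  have hc1 : 1 ≤ c := by
    have h40 : 0 ≤ Real.log 40 := Real.log_nonneg (by norm_num)
    have hD1l : 0 ≤ Real.log D1 := Real.log_nonneg hD1
    linarith
  -- step bound
  have hstep : ∀ j, J ≤ j → Lf n (j+1) ≤ Lf n j + c * ((j:ℝ)+1) := by
    intro j hj
    obtain ⟨h3, _, hadd⟩ := hJ j hj
    have hpos : 0 < Lf n j := by linarith
    have hlogL : Real.log (Lf n j) ≤ Real.log D1 + (j:ℝ) := by
      calc Real.log (Lf n j) ≤ Real.log (D1 * 2^j) :=
            Real.log_le_log hpos (hD1b j)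
        _ = Real.log D1 + (j:ℝ) * Real.log 2 := by
            rw [Real.log_mul (by linarith) (by positivity), Real.log_pow]
        _ ≤ Real.log D1 + (j:ℝ) := by
            have := Real.log_two_lt_d9
            nlinarith [Nat.cast_nonneg (α := ℝ) j]
    have h40 : 0 ≤ Real.log 40 := Real.log_nonneg (by norm_num)
    have hD1l : 0 ≤ Real.log D1 := Real.log_nonneg hD1
    have hj0 : (0:ℝ) ≤ (j:ℝ) := Nat.cast_nonneg j
    calc Lf n (j+1) ≤ Lf n j + Real.log 40 + Real.log (Lf n j) := hadd
      _ ≤ Lf n j + Real.log 40 + (Real.log D1 + (j:ℝ)) := by linarith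
      _ ≤ Lf n j + c * ((j:ℝ)+1) := by rw [hc]; nlinarith
  refine ⟨max 1 (Lf n J + c), le_max_left _ _, ?_⟩
  set D := max 1 (Lf n J + c) with hD
  have hD0 : (1:ℝ) ≤ D := le_max_left _ _
  have hDJ : Lf n J + c ≤ D := le_max_right _ _
  have hLJ : 0 ≤ Lf n J := Lf_nonneg n hn J
  intro j
  induction j with
  | zero =>
    have h1 : Lf n 0 ≤ Lf n J := Lf_mono n hn (Nat.zero_le J)
    have : ((0:ℕ):ℝ) + 1 = 1 := by norm_num
    rw [this]
    nlinarith
  | succ j ih =>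
    have hj1 : (0:ℝ) ≤ (j:ℝ) := Nat.cast_nonneg j
    rcases le_or_gt J j with h | h
    · have h2 := hstep j h
      have hcD : c ≤ D := by linarith
      have hkey : c * ((j:ℝ)+1) ≤ D * (2*(j:ℝ)+3) := by nlinarith
      have hpush : ((j+1:ℕ):ℝ) = (j:ℝ)+1 := by push_cast; ring
      rw [hpush]
      nlinarith
    · have h1 : Lf n (j+1) ≤ Lf n J := Lf_mono n hn (by omega)
      have hpush : ((j+1:ℕ):ℝ) = (j:ℝ)+1 := by push_cast; ring
      rw [hpush]
      have hc0 : 0 ≤ c := by linarith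
      nlinarith

lemma Lf_upper (n : ℕ) (hn : 1 ≤ n) :
    ∃ E : ℝ, 1 ≤ E ∧ ∀ j : ℕ, 1 ≤ j → Lf n j ≤ E * (1 + (j:ℝ) + (j:ℝ) * Real.log j) := by
  obtain ⟨J, hJ⟩ := Lf_rec n hn
  obtain ⟨D, hD, hDb⟩ := Lf_sq_bound n hn
  set c0 : ℝ := Real.log 40 + Real.log D with hc0
  have hc0n : 0 ≤ c0 := by
    have h40 : 0 ≤ Real.log 40 := Real.log_nonneg (by norm_num)
    have hDl : 0 ≤ Real.log D := Real.log_nonneg hD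
    linarith
  set J1 := max J 1 with hJ1
  have hJ11 : 1 ≤ J1 := le_max_right _ _
  -- step bound : for j ≥ J1, Lf (j+1) ≤ Lf j + c0 + 2 log (j+1)
  have hstep : ∀ j, J1 ≤ j → Lf n (j+1) ≤ Lf n j + c0 + 2 * Real.log ((j:ℝ)+1) := by
    intro j hj
    obtain ⟨h3, _, hadd⟩ := hJ j (le_trans (le_max_left _ _) hj)
    have hpos : 0 < Lf n j := by linarith
    have hj1 : (1:ℝ) ≤ (j:ℝ)+1 := by
      have := Nat.cast_nonneg (α := ℝ) j; linarith
    have hlogL : Real.log (Lf n j) ≤ Real.log D + 2 * Real.log ((j:ℝ)+1) := by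
      calc Real.log (Lf n j) ≤ Real.log (D * ((j:ℝ)+1)^2) :=
            Real.log_le_log hpos (hDb j)
        _ = Real.log D + 2 * Real.log ((j:ℝ)+1) := by
            rw [Real.log_mul (by linarith) (by positivity), Real.log_pow]
            push_cast; ring
    calc Lf n (j+1) ≤ Lf n j + Real.log 40 + Real.log (Lf n j) := hadd
      _ ≤ Lf n j + c0 + 2 * Real.log ((j:ℝ)+1) := by rw [hc0]; linarith
  -- inductive bound for j ≥ J1 : Lf j ≤ Lf J1 + (c0 + 2 log j) * j
  have hmain : ∀ j, J1 ≤ j → Lf n j ≤ Lf n J1 + (c0 + 2 * Real.log j) * (j:ℝ) := by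
    intro j hj
    induction j, hj using Nat.le_induction with
    | base =>
      have hlog : 0 ≤ Real.log (J1:ℝ) := Real.log_nonneg (by exact_mod_cast hJ11)
      nlinarith [Nat.cast_nonneg (α := ℝ) J1]
    | succ j hj ih =>
      have hjr : (1:ℝ) ≤ (j:ℝ) := by exact_mod_cast le_trans hJ11 hj
      have hlogmono : Real.log (j:ℝ) ≤ Real.log ((j:ℝ)+1) :=
        Real.log_le_log (by linarith) (by linarith)
      have hlogpos : 0 ≤ Real.log ((j:ℝ)+1) := Real.log_nonneg (by linarith)
      have h2 := hstep j hj
      have hpush : ((j+1:ℕ):ℝ) = (j:ℝ)+1 := by push_cast; ring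
      rw [hpush]
      nlinarith
  refine ⟨Lf n J1 + c0 + 2, by nlinarith [Lf_nonneg n hn J1], ?_⟩
  set E := Lf n J1 + c0 + 2 with hE
  have hLJ1 : 0 ≤ Lf n J1 := Lf_nonneg n hn J1
  have hE2 : 2 ≤ E := by linarith
  intro j hj
  have hjr : (1:ℝ) ≤ (j:ℝ) := by exact_mod_cast hj
  have hlogj : 0 ≤ Real.log (j:ℝ) := Real.log_nonneg hjr
  have hx : 0 ≤ (j:ℝ) * Real.log j := mul_nonneg (by linarith) hlogj
  rcases le_or_gt J1 j with h | h
  · have h1 := hmain j h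
    nlinarith [mul_nonneg hLJ1 (show (0:ℝ) ≤ (j:ℝ) by linarith), mul_nonneg hLJ1 hx,
      mul_nonneg hc0n hx, mul_nonneg hc0n (show (0:ℝ) ≤ (j:ℝ) by linarith)]
  · have h1 : Lf n j ≤ Lf n J1 := Lf_mono n hn (by omega)
    nlinarith [mul_nonneg (show (0:ℝ) ≤ E by linarith) (show (0:ℝ) ≤ (j:ℝ) + (j:ℝ)*Real.log j by linarith)]

lemma natCard_Icc_eq (a b : ℕ) : Nat.card (Set.Icc a b) = b + 1 - a := by
  rw [Nat.card_coe_set_eq, ← Finset.coe_Icc, Set.ncard_coe_finset, Nat.card_Icc]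

lemma counting_finite (n : ℕ) (hn : 1 ≤ n) (x : ℝ) :
    {j : ℕ | 1 ≤ j ∧ (pk j n : ℝ) ≤ x}.Finite := by
  apply (Set.finite_Icc 1 ⌊x⌋₊).subset
  rintro j ⟨hj1, hjx⟩
  have h1 : (j:ℝ) ≤ (pk j n : ℝ) := by
    exact_mod_cast (by have := pk_ge n hn j; omega : j ≤ pk j n)
  have h0 : (0:ℝ) ≤ x := le_trans (by positivity) (le_trans h1 hjx)
  exact ⟨hj1, Nat.le_floor (le_trans h1 hjx)⟩

lemma counting_ge (n : ℕ) (hn : 1 ≤ n) (x : ℝ) (k : ℕ) (hk : 1 ≤ k)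
    (hkx : (pk k n : ℝ) ≤ x) :
    k ≤ Nat.card {j : ℕ | 1 ≤ j ∧ (pk j n : ℝ) ≤ x} := by
  have hsub : Set.Icc 1 k ⊆ {j : ℕ | 1 ≤ j ∧ (pk j n : ℝ) ≤ x} := by
    rintro j ⟨hj1, hjk⟩
    refine ⟨hj1, le_trans ?_ hkx⟩
    exact_mod_cast (pk_strictMono n hn).monotone hjk
  have := Nat.card_mono (counting_finite n hn x) hsub
  rwa [natCard_Icc_eq, Nat.add_sub_cancel] at this

lemma counting_le (n : ℕ) (hn : 1 ≤ n) (x : ℝ) (m : ℕ) (hm : 1 ≤ m)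
    (hxm : x < (pk m n : ℝ)) :
    Nat.card {j : ℕ | 1 ≤ j ∧ (pk j n : ℝ) ≤ x} ≤ m - 1 := by
  have hsub : {j : ℕ | 1 ≤ j ∧ (pk j n : ℝ) ≤ x} ⊆ Set.Icc 1 (m-1) := by
    rintro j ⟨hj1, hjx⟩
    have hlt : (pk j n : ℝ) < (pk m n : ℝ) := lt_of_le_of_lt hjx hxm
    have hjm : j < m := by
      have h := (pk_strictMono n hn).lt_iff_lt.1 (show pk j n < pk m n by exact_mod_cast hlt)
      exact h
    exact ⟨hj1, by omega⟩
  have := Nat.card_mono (Set.finite_Icc _ _) hsub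
  rw [natCard_Icc_eq] at this
  omega

lemma counting_pk_le (n : ℕ) (hn : 1 ≤ n) (x : ℝ)
    (h1 : 1 ≤ Nat.card {j : ℕ | 1 ≤ j ∧ (pk j n : ℝ) ≤ x}) :
    (pk (Nat.card {j : ℕ | 1 ≤ j ∧ (pk j n : ℝ) ≤ x}) n : ℝ) ≤ x := by
  by_contra hcon
  push_neg at hcon
  have := counting_le n hn x _ h1 hcon
  omega

/-- Workhorse for part 1: `N x ≤ J + log x / c`. -/
lemma counting_upper (n : ℕ) (hn : 1 ≤ n) (c : ℝ) (hc : 0 < c) :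
    ∃ J : ℕ, 1 ≤ J ∧ ∀ x : ℝ, 0 ≤ Real.log x →
      (Nat.card {j : ℕ | 1 ≤ j ∧ (pk j n : ℝ) ≤ x} : ℝ) ≤ (J:ℝ) + Real.log x / c := by
  obtain ⟨J, hJ1, hJ⟩ := Lf_lower n hn c
  refine ⟨J, hJ1, fun x hx => ?_⟩
  set N := Nat.card {j : ℕ | 1 ≤ j ∧ (pk j n : ℝ) ≤ x} with hN
  rcases le_or_gt N J with h | h
  · have : (N:ℝ) ≤ (J:ℝ) := by exact_mod_cast h
    have h2 : 0 ≤ Real.log x / c := div_nonneg hx hc.le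
    linarith
  · have hN1 : 1 ≤ N := by omega
    have hpk := counting_pk_le n hn x hN1
    have hLN : Lf n N ≤ Real.log x := by
      unfold Lf
      exact Real.log_le_log (by exact_mod_cast pk_pos n hn N) hpk
    have hlow := hJ N (by omega)
    have : c * ((N:ℝ) - (J:ℝ)) ≤ Real.log x := le_trans hlow hLN
    have h2 : (N:ℝ) - (J:ℝ) ≤ Real.log x / c := (le_div_iff₀' hc).mpr this
    linarith

lemma part1 (n : ℕ) (hn : 1 ≤ n) :
    Tendsto (fun x : ℝ =>
        (Nat.card {j : ℕ | 1 ≤ j ∧ (pk j n : ℝ) ≤ x} : ℝ) / Real.log x)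
      atTop (𝓝 0) := by
  rw [tendsto_order]
  constructor
  · intro c hc
    filter_upwards [Real.tendsto_log_atTop.eventually_gt_atTop 0] with x hx
    have h0 : (0:ℝ) ≤ (Nat.card {j : ℕ | 1 ≤ j ∧ (pk j n : ℝ) ≤ x} : ℝ) / Real.log x :=
      div_nonneg (Nat.cast_nonneg _) hx.le
    linarith
  · intro ε hε
    obtain ⟨J, hJ1, hJ⟩ := counting_upper n hn (4/ε) (by positivity)
    filter_upwards [Real.tendsto_log_atTop.eventually_gt_atTop (max 0 (2*(J:ℝ)/ε))] with x hx
    have hlogpos : 0 < Real.log x := lt_of_le_of_lt (le_max_left _ _) hx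
    have h1 := hJ x hlogpos.le
    have h2 : 2*(J:ℝ)/ε < Real.log x := lt_of_le_of_lt (le_max_right _ _) hx
    have h2' : 2*(J:ℝ) < Real.log x * ε := (div_lt_iff₀ hε).1 h2
    set N := Nat.card {j : ℕ | 1 ≤ j ∧ (pk j n : ℝ) ≤ x} with hN
    have hd : (N:ℝ)/Real.log x ≤ ((J:ℝ) + Real.log x/(4/ε))/Real.log x := by
      exact div_le_div_of_nonneg_right h1 hlogpos.le
    have heq : ((J:ℝ) + Real.log x/(4/ε))/Real.log x = (J:ℝ)/Real.log x + ε/4 := by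
      field_simp
    have hJd : (J:ℝ)/Real.log x < ε/2 := by
      rw [div_lt_iff₀ hlogpos]
      nlinarith
    calc (N:ℝ)/Real.log x ≤ (J:ℝ)/Real.log x + ε/4 := by rw [← heq]; exact hd
      _ < ε/2 + ε/4 := by linarith
      _ < ε := by linarith

set_option maxHeartbeats 1600000 in
lemma part2 (n : ℕ) (hn : 1 ≤ n) :
    Tendsto (fun x : ℝ =>
        Real.log (Nat.card {j : ℕ | 1 ≤ j ∧ (pk j n : ℝ) ≤ x}) /
          Real.log (Real.log x)) atTop (𝓝 1) := by
  rw [tendsto_order]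
  constructor
  · -- lower bound : ∀ c < 1, eventually c < f x
    intro c hc
    set c' : ℝ := max c (1/2) with hc'
    have hc'lt : c' < 1 := max_lt hc (by norm_num)
    have hc'pos : (0:ℝ) < c' := lt_of_lt_of_le (by norm_num) (le_max_right _ _)
    have hcc' : c ≤ c' := le_max_left _ _
    set β : ℝ := (1+c')/2 with hβ
    have hβ1 : β < 1 := by rw [hβ]; linarith
    have hβc : c' < β := by rw [hβ]; linarith
    have hβpos : 0 < β := by linarith
    obtain ⟨E, hE1, hEb⟩ := Lf_upper n hn
    have hC1 : ∀ᶠ y : ℝ in atTop, (4:ℝ) ≤ y ^ β :=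
      (tendsto_rpow_atTop hβpos).eventually_ge_atTop 4
    have hC2 : ∀ᶠ y : ℝ in atTop, 3*E*Real.log y ≤ y ^ (1-β) := by
      have hlo := isLittleO_log_rpow_atTop (by linarith : (0:ℝ) < 1-β)
      have h3E : (0:ℝ) < 3*E := by linarith
      have hev := (Asymptotics.isLittleO_iff.1 hlo) (show (0:ℝ) < 1/(3*E) by positivity)
      filter_upwards [hev, eventually_ge_atTop (1:ℝ)] with y h1 hy1
      rw [Real.norm_eq_abs, Real.norm_eq_abs] at h1
      have hylog : 0 ≤ Real.log y := Real.log_nonneg hy1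
      have hyr : 0 ≤ y^(1-β) := Real.rpow_nonneg (by linarith) _
      rw [abs_of_nonneg hylog, abs_of_nonneg hyr] at h1
      calc 3*E*Real.log y ≤ 3*E*((1/(3*E)) * y^(1-β)) := by nlinarith
        _ = y^(1-β) := by field_simp
    have hC3 : ∀ᶠ y : ℝ in atTop, 1 ≤ Real.log y ∧ 1 < (β - c')*Real.log y := by
      have hβc' : (0:ℝ) < β - c' := by linarith
      filter_upwards [Real.tendsto_log_atTop.eventually_ge_atTop 1,
        Real.tendsto_log_atTop.eventually_gt_atTop (1/(β-c'))] with y h1 h2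
      refine ⟨h1, ?_⟩
      have := (div_lt_iff₀ hβc').1 h2
      nlinarith
    filter_upwards [Real.tendsto_log_atTop.eventually hC1,
      Real.tendsto_log_atTop.eventually hC2,
      Real.tendsto_log_atTop.eventually hC3,
      Real.tendsto_log_atTop.eventually_ge_atTop 1,
      eventually_gt_atTop (0:ℝ)] with x h1 h2 h3 h4 hx0
    obtain ⟨h3a, h3b⟩ := h3
    set y := Real.log x with hy
    set z := Real.log y with hz
    have hy0 : (0:ℝ) < y := by linarith
    set k := ⌊y ^ β⌋₊ with hk
    have hy4 : (4:ℝ) ≤ y^β := h1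
    have hkle : (k:ℝ) ≤ y^β := Nat.floor_le (by positivity)
    have hkge : y^β - 1 ≤ (k:ℝ) := le_of_lt (Nat.sub_one_lt_floor _)
    have hk3 : 3 ≤ k := by
      have h : (3:ℝ) ≤ (k:ℝ) := by linarith
      exact_mod_cast h
    have hk34 : (3/4)*y^β ≤ (k:ℝ) := by linarith
    have hkpos : (0:ℝ) < (k:ℝ) := by
      have : (3:ℝ) ≤ (k:ℝ) := by exact_mod_cast hk3
      linarith
    have hlogk1 : 1 ≤ Real.log k := by
      rw [Real.le_log_iff_exp_le hkpos]
      have h := Real.exp_one_lt_d9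
      have : (3:ℝ) ≤ (k:ℝ) := by exact_mod_cast hk3
      linarith
    have hlogyβ : Real.log (y^β) = β * z := by rw [Real.log_rpow hy0]
    have hlogkz : Real.log k ≤ z := by
      have h0 : Real.log k ≤ Real.log (y^β) := Real.log_le_log hkpos hkle
      rw [hlogyβ] at h0
      nlinarith
    have hzpos : (0:ℝ) < z := by linarith
    have hLk : Lf n k ≤ y := by
      have hkk : (k:ℝ) ≤ (k:ℝ) * Real.log k := by nlinarith
      have hkk1 : (1:ℝ) ≤ (k:ℝ) * Real.log k := by nlinarith
      have hmul : (k:ℝ) * Real.log k ≤ y^β * z := by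
        apply mul_le_mul hkle hlogkz (by linarith) (by positivity)
      calc Lf n k ≤ E*(1 + (k:ℝ) + (k:ℝ)*Real.log k) := hEb k (by omega)
        _ ≤ 3*E*((k:ℝ)*Real.log k) := by nlinarith
        _ ≤ 3*E*(y^β * z) := by nlinarith
        _ = y^β * (3*E*z) := by ring
        _ ≤ y^β * y^(1-β) := by
            apply mul_le_mul_of_nonneg_left h2 (by positivity)
        _ = y := by
            rw [← Real.rpow_add hy0, show β + (1-β) = 1 by ring, Real.rpow_one]
    have hpkx : (pk k n : ℝ) ≤ x := by
      have hpk0 : (0:ℝ) < (pk k n : ℝ) := by exact_mod_cast pk_pos n hn k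
      have h := Real.exp_le_exp.2 hLk
      rw [show Lf n k = Real.log (pk k n) from rfl, Real.exp_log hpk0, hy,
        Real.exp_log hx0] at h
      exact h
    set N := Nat.card {j : ℕ | 1 ≤ j ∧ (pk j n : ℝ) ≤ x} with hN
    have hNk : k ≤ N := counting_ge n hn x k (by omega) hpkx
    have hlogN : Real.log k ≤ Real.log N :=
      Real.log_le_log hkpos (by exact_mod_cast hNk)
    have hlogk_lb : β*z - (1/2) ≤ Real.log k := by
      have hm : (0:ℝ) < (3/4)*y^β := by positivity
      have h0 : Real.log ((3/4)*y^β) ≤ Real.log k := Real.log_le_log hm hk34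
      rw [Real.log_mul (by norm_num) (by positivity), hlogyβ] at h0
      have h34 : -(1/2:ℝ) ≤ Real.log (3/4) := by
        have h43 : Real.log (4/3) ≤ 1/3 := by
          have := Real.log_le_sub_one_of_pos (show (0:ℝ) < 4/3 by norm_num)
          linarith
        have : Real.log (3/4) = -Real.log (4/3) := by
          rw [← Real.log_inv]; norm_num
        linarith
      linarith
    rw [lt_div_iff₀ hzpos]
    have hstep : c'*z + 1/2 < β*z := by nlinarith
    have hcz : c*z ≤ c'*z := mul_le_mul_of_nonneg_right hcc' hzpos.le
    linarith
  · -- upper bound : ∀ c > 1, eventually f x < c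
    intro c hc
    obtain ⟨J, hJ1, hJ⟩ := counting_upper n hn 2 (by norm_num)
    filter_upwards [Real.tendsto_log_atTop.eventually_gt_atTop (max 3 (2*(J:ℝ)))] with x hx
    set y := Real.log x with hy
    have hy3 : 3 < y := lt_of_le_of_lt (le_max_left _ _) hx
    have hy2J : 2*(J:ℝ) < y := lt_of_le_of_lt (le_max_right _ _) hx
    set N := Nat.card {j : ℕ | 1 ≤ j ∧ (pk j n : ℝ) ≤ x} with hN
    have hNb : (N:ℝ) ≤ (J:ℝ) + y/2 := hJ x (by linarith)
    have hNy : (N:ℝ) ≤ y := by linarith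
    have hzpos : (0:ℝ) < Real.log y := Real.log_pos (by linarith)
    have hlogN : Real.log N ≤ Real.log y := by
      rcases Nat.eq_zero_or_pos N with h0 | h0
      · rw [h0]
        simpa using hzpos.le
      · exact Real.log_le_log (by exact_mod_cast h0) hNy
    have : Real.log N / Real.log y ≤ 1 := (div_le_one hzpos).2 hlogN
    linarith

end AuxiliaryLemmas

theorem iterated_prime_column_counting_asymptotics (n : ℕ) (hn : 1 ≤ n) :
    Tendsto (fun x : ℝ =>
        (Nat.card {j : ℕ | 1 ≤ j ∧ (pk j n : ℝ) ≤ x} : ℝ) / Real.log x)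
      atTop (𝓝 0) ∧
    Tendsto (fun x : ℝ =>
        Real.log (Nat.card {j : ℕ | 1 ≤ j ∧ (pk j n : ℝ) ≤ x}) /
          Real.log (Real.log x)) atTop (𝓝 1) := by
  exact ⟨part1 n hn, part2 n hn⟩
end
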